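/- Let φ be 𝒯-good. Then for every I ∈ S_φ, I coincides up to a μ-null set with the union ⋃{A(φ, J) : J ∈ S_φ, J ⊆ I}; in particular μ(I) = Σ_{J ∈ S_φ, J ⊆ I} μ(A(φ,J)). -/

import Mathlib

open MeasureTheory Set Filter
open scoped ENNReal

/-- A tree `𝒯` on a probability space `(X, μ)` in the sense of Melas:
`X ∈ 𝒯`; every `I ∈ 𝒯` is measurable with `μ(I) > 0`; each `I ∈ 𝒯` has a finite or
countable family `C(I) ⊆ 𝒯` of at least two pairwise disjoint elements with union `I`;
`𝒯` is the union of its generations `𝒯_(m)`; and `sup_{I ∈ 𝒯_(m)} μ(I) → 0`. -/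
structure DyadicTree {X : Type*} [MeasurableSpace X] (μ : Measure X) where
  mem : Set (Set X)
  univ_mem : Set.univ ∈ mem
  meas : ∀ I ∈ mem, MeasurableSet I
  measure_pos : ∀ I ∈ mem, 0 < μ I
  C : Set X → Set (Set X)
  C_subset_mem : ∀ I ∈ mem, C I ⊆ mem
  C_countable : ∀ I ∈ mem, (C I).Countable
  C_nontrivial : ∀ I ∈ mem, ∃ J ∈ C I, ∃ K ∈ C I, J ≠ K
  C_disjoint : ∀ I ∈ mem, (C I).Pairwise Disjoint
  C_union : ∀ I ∈ mem, ⋃₀ C I = I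
  gen : ℕ → Set (Set X)
  gen_zero : gen 0 = {Set.univ}
  gen_succ : ∀ m, gen (m + 1) = ⋃ I ∈ gen m, C I
  mem_eq : mem = ⋃ m, gen m
  sup_measure_tendsto : Tendsto (fun m => ⨆ I ∈ gen m, μ I) atTop (nhds 0)

variable {X : Type*} [MeasurableSpace X]

/-- The average `Av_I(φ) = (1/μ(I)) ∫_I φ dμ`. -/
noncomputable def Av (μ : Measure X) (I : Set X) (φ : X → ℝ≥0∞) : ℝ≥0∞ :=
  (∫⁻ y in I, φ y ∂μ) / μ I

/-- The dyadic-like maximal operator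
`M_𝒯 φ(x) = sup { (1/μ(I)) ∫_I φ dμ : x ∈ I ∈ 𝒯 }`. -/
noncomputable def maxOp {μ : Measure X} (T : DyadicTree μ) (φ : X → ℝ≥0∞) (x : X) : ℝ≥0∞ :=
  ⨆ I ∈ T.mem, ⨆ _ : x ∈ I, Av μ I φ

variable {μ : Measure X}

/-- The exceptional set `𝒜_φ = {x : M_𝒯φ(x) > Av_I(φ) for all I ∈ 𝒯 with x ∈ I}`. -/
def badSet (T : DyadicTree μ) (φ : X → ℝ≥0∞) : Set X :=
  {x | ∀ I ∈ T.mem, x ∈ I → Av μ I φ < maxOp T φ x}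

/-- `φ` is `𝒯`-good if the set `𝒜_φ` has `μ`-measure zero. -/
def TGood (T : DyadicTree μ) (φ : X → ℝ≥0∞) : Prop :=
  μ (badSet T φ) = 0

/-- The set `A(φ, I) = {x ∈ X ∖ 𝒜_φ : I_φ(x) = I}`, where `I_φ(x)` is the largest
`I ∈ 𝒯` with `x ∈ I` and `M_𝒯φ(x) = Av_I(φ)`. -/
def ASet (T : DyadicTree μ) (φ : X → ℝ≥0∞) (I : Set X) : Set X :=
  {x | x ∉ badSet T φ ∧ x ∈ I ∧ maxOp T φ x = Av μ I φ ∧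
    ∀ J ∈ T.mem, x ∈ J → maxOp T φ x = Av μ J φ → J ⊆ I}

/-- The subtree `S_φ = {I ∈ 𝒯 : μ(A(φ,I)) > 0} ∪ {X}`. -/
def Sphi (T : DyadicTree μ) (φ : X → ℝ≥0∞) : Set (Set X) :=
  {I ∈ T.mem | 0 < μ (ASet T φ I)} ∪ {Set.univ}

/-!
Off the null set `𝒜_φ`, every `x` lies in exactly one `A(φ, J)`: by the tree structure the
elements of `𝒯` through `x` form a chain, and the one of least generation realising
`M_𝒯φ(x)` is the largest one. If `x ∈ I ∈ S_φ` then `J ⊆ I`: otherwise `I ⊊ J`, and a point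
`y ∈ A(φ, I)` would give `Av_J ≤ M_𝒯φ(y) = Av_I ≤ M_𝒯φ(x) = Av_J`, so `J` would also realise
`M_𝒯φ(y)`, against the maximality of `I`. The sets `A(φ, J)` of measure zero have a null union
since `𝒯` is countable, so the disjoint sets `A(φ, J)`, `J ∈ S_φ`, `J ⊆ I`, exhaust `I` up to a
null set.
-/

namespace DyadicTree

variable (T : DyadicTree μ)

theorem gen_subset_mem (m : ℕ) : T.gen m ⊆ T.mem := by
  rw [T.mem_eq]
  exact subset_iUnion T.gen m

theorem gen_countable (m : ℕ) : (T.gen m).Countable := by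
  induction m with
  | zero => simp [T.gen_zero]
  | succ m ih =>
    rw [T.gen_succ]
    exact ih.biUnion fun I hI => T.C_countable I (T.gen_subset_mem m hI)

theorem mem_countable : T.mem.Countable := by
  rw [T.mem_eq]
  exact countable_iUnion T.gen_countable

theorem subset_of_mem_C {I J : Set X} (hI : I ∈ T.mem) (hJ : J ∈ T.C I) : J ⊆ I := by
  rw [← T.C_union I hI]
  exact subset_sUnion_of_mem hJ

theorem eq_of_mem_gen {m : ℕ} {I J : Set X} (hI : I ∈ T.gen m) (hJ : J ∈ T.gen m) {x : X}
    (hxI : x ∈ I) (hxJ : x ∈ J) : I = J := by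
  induction m generalizing I J with
  | zero =>
    rw [T.gen_zero] at hI hJ
    rw [mem_singleton_iff.mp hI, mem_singleton_iff.mp hJ]
  | succ m ih =>
    rw [T.gen_succ, mem_iUnion₂] at hI hJ
    obtain ⟨P, hP, hIP⟩ := hI
    obtain ⟨Q, hQ, hJQ⟩ := hJ
    have hPm := T.gen_subset_mem m hP
    obtain rfl : P = Q := ih hP hQ (T.subset_of_mem_C hPm hIP hxI)
      (T.subset_of_mem_C (T.gen_subset_mem m hQ) hJQ hxJ)
    by_contra hne
    exact disjoint_left.mp (T.C_disjoint P hPm hIP hJQ hne) hxI hxJ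

theorem exists_superset_mem_gen {m n : ℕ} (h : m ≤ n) {K : Set X} (hK : K ∈ T.gen n) :
    ∃ J ∈ T.gen m, K ⊆ J := by
  induction n, h using Nat.le_induction generalizing K with
  | base => exact ⟨K, hK, subset_rfl⟩
  | succ n _ ih =>
    rw [T.gen_succ, mem_iUnion₂] at hK
    obtain ⟨P, hP, hKP⟩ := hK
    obtain ⟨J, hJ, hPJ⟩ := ih hP
    exact ⟨J, hJ, (T.subset_of_mem_C (T.gen_subset_mem n hP) hKP).trans hPJ⟩

theorem subset_of_mem_gen_of_le {m n : ℕ} (h : m ≤ n) {I K : Set X} (hI : I ∈ T.gen m)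
    (hK : K ∈ T.gen n) {x : X} (hxI : x ∈ I) (hxK : x ∈ K) : K ⊆ I := by
  obtain ⟨J, hJ, hKJ⟩ := T.exists_superset_mem_gen h hK
  rwa [T.eq_of_mem_gen hI hJ hxI (hKJ hxK)]

theorem subset_or_subset_of_mem {I J : Set X} (hI : I ∈ T.mem) (hJ : J ∈ T.mem) {x : X}
    (hxI : x ∈ I) (hxJ : x ∈ J) : I ⊆ J ∨ J ⊆ I := by
  rw [T.mem_eq, mem_iUnion] at hI hJ
  obtain ⟨m, hm⟩ := hI
  obtain ⟨n, hn⟩ := hJ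
  rcases le_total m n with h | h
  · exact Or.inr (T.subset_of_mem_gen_of_le h hm hn hxI hxJ)
  · exact Or.inl (T.subset_of_mem_gen_of_le h hn hm hxJ hxI)

end DyadicTree

section MaximalFunction

variable (T : DyadicTree μ) (φ : X → ℝ≥0∞)

theorem Av_le_maxOp {I : Set X} (hI : I ∈ T.mem) {x : X} (hx : x ∈ I) :
    Av μ I φ ≤ maxOp T φ x :=
  le_iSup₂_of_le I hI (le_iSup (fun _ : x ∈ I => Av μ I φ) hx)

theorem measurable_maxOp : Measurable (maxOp T φ) := by
  classical
  refine Measurable.biSup _ T.mem_countable fun I hI => ?_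
  simp only [iSup_eq_if]
  exact Measurable.ite (T.meas I hI) measurable_const measurable_const

theorem notMem_badSet_of_maxOp_eq {I : Set X} (hI : I ∈ T.mem) {x : X} (hx : x ∈ I)
    (heq : maxOp T φ x = Av μ I φ) : x ∉ badSet T φ :=
  fun hbad => (hbad I hI hx).ne heq.symm

theorem exists_maxOp_eq_of_notMem_badSet {x : X} (hx : x ∉ badSet T φ) :
    ∃ I ∈ T.mem, x ∈ I ∧ maxOp T φ x = Av μ I φ := by
  simp only [badSet, mem_ofPred_eq, not_forall, not_lt] at hx
  obtain ⟨I, hI, hxI, hle⟩ := hx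
  exact ⟨I, hI, hxI, le_antisymm hle (Av_le_maxOp T φ hI hxI)⟩

theorem exists_mem_ASet {x : X} (hx : x ∉ badSet T φ) : ∃ I ∈ T.mem, x ∈ ASet T φ I := by
  classical
  have hP : ∃ m, ∃ I ∈ T.gen m, x ∈ I ∧ maxOp T φ x = Av μ I φ := by
    obtain ⟨I, hI, hxI, heq⟩ := exists_maxOp_eq_of_notMem_badSet T φ hx
    rw [T.mem_eq, mem_iUnion] at hI
    obtain ⟨m, hm⟩ := hI
    exact ⟨m, I, hm, hxI, heq⟩
  obtain ⟨I, hI, hxI, heq⟩ := Nat.find_spec hP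
  refine ⟨I, T.gen_subset_mem _ hI, hx, hxI, heq, fun J hJ hxJ heqJ => ?_⟩
  rw [T.mem_eq, mem_iUnion] at hJ
  obtain ⟨n, hn⟩ := hJ
  exact T.subset_of_mem_gen_of_le (Nat.find_min' hP ⟨J, hn, hxJ, heqJ⟩) hI hn hxI hxJ

theorem eq_of_mem_ASet {I J : Set X} (hI : I ∈ T.mem) (hJ : J ∈ T.mem) {x : X}
    (hxI : x ∈ ASet T φ I) (hxJ : x ∈ ASet T φ J) : I = J :=
  (hxJ.2.2.2 I hI hxI.2.1 hxI.2.2.1).antisymm (hxI.2.2.2 J hJ hxJ.2.1 hxJ.2.2.1)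

theorem subset_of_mem_ASet_of_nonempty {I J : Set X} (hI : I ∈ T.mem) (hJ : J ∈ T.mem)
    (hne : (ASet T φ I).Nonempty) {x : X} (hxJ : x ∈ ASet T φ J) (hxI : x ∈ I) : J ⊆ I := by
  refine (T.subset_or_subset_of_mem hI hJ hxI hxJ.2.1).elim (fun hIJ => ?_) id
  obtain ⟨y, hy⟩ := hne
  have hyJ : y ∈ J := hIJ hy.2.1
  have hJI : Av μ J φ ≤ Av μ I φ := hy.2.2.1 ▸ Av_le_maxOp T φ hJ hyJ
  have hIJ' : Av μ I φ ≤ Av μ J φ := hxJ.2.2.1 ▸ Av_le_maxOp T φ hI hxI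
  exact hy.2.2.2 J hJ hyJ (hy.2.2.1.trans (le_antisymm hIJ' hJI))

theorem ASet_eq_diff {I : Set X} (hI : I ∈ T.mem) :
    ASet T φ I = (I ∩ {x | maxOp T φ x = Av μ I φ}) \
      ⋃ J ∈ {J ∈ T.mem | ¬J ⊆ I}, J ∩ {x | maxOp T φ x = Av μ J φ} := by
  ext x
  simp only [ASet, Set.mem_sdiff, mem_inter_iff, mem_ofPred_eq, mem_iUnion₂, not_exists, not_and,
    exists_prop]
  constructor
  · rintro ⟨-, hxI, heq, hmax⟩
    exact ⟨⟨hxI, heq⟩, fun J ⟨hJ, hJI⟩ hxJ heqJ => hJI (hmax J hJ hxJ heqJ)⟩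
  · rintro ⟨⟨hxI, heq⟩, hmax⟩
    exact ⟨notMem_badSet_of_maxOp_eq T φ hI hxI heq, hxI, heq,
      fun J hJ hxJ heqJ => not_not.mp fun hJI => hmax J ⟨hJ, hJI⟩ hxJ heqJ⟩

theorem measurableSet_ASet {I : Set X} (hI : I ∈ T.mem) : MeasurableSet (ASet T φ I) := by
  have hmeas : ∀ J ∈ T.mem, MeasurableSet (J ∩ {x | maxOp T φ x = Av μ J φ}) :=
    fun J hJ => (T.meas J hJ).inter (measurable_maxOp T φ (measurableSet_singleton _))
  rw [ASet_eq_diff T φ hI]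
  exact (hmeas I hI).diff
    (.biUnion (T.mem_countable.mono (sep_subset _ _)) fun J hJ => hmeas J hJ.1)

theorem ASet_subset (I : Set X) : ASet T φ I ⊆ I :=
  fun _ hx => hx.2.1

theorem Sphi_subset_mem : Sphi T φ ⊆ T.mem := by
  rintro I (hI | rfl)
  exacts [hI.1, T.univ_mem]

theorem subset_of_mem_ASet_of_mem_Sphi {I J : Set X} (hI : I ∈ Sphi T φ) (hJ : J ∈ T.mem)
    {x : X} (hxJ : x ∈ ASet T φ J) (hxI : x ∈ I) : J ⊆ I := by
  rcases hI with hI | rfl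
  · exact subset_of_mem_ASet_of_nonempty T φ hI.1 hJ (nonempty_of_measure_ne_zero hI.2.ne')
      hxJ hxI
  · exact subset_univ J

theorem measure_biUnion_null_ASet :
    μ (⋃ J ∈ {J ∈ T.mem | μ (ASet T φ J) = 0}, ASet T φ J) = 0 :=
  (measure_biUnion_null_iff (T.mem_countable.mono (sep_subset _ _))).mpr fun _ hJ => hJ.2

theorem diff_biUnion_ASet_subset {I : Set X} (hI : I ∈ Sphi T φ) :
    I \ ⋃ J ∈ {J ∈ Sphi T φ | J ⊆ I}, ASet T φ J ⊆
      badSet T φ ∪ ⋃ J ∈ {J ∈ T.mem | μ (ASet T φ J) = 0}, ASet T φ J := by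
  rintro x ⟨hxI, hxU⟩
  refine or_iff_not_imp_left.mpr fun hx => ?_
  obtain ⟨J, hJ, hxJ⟩ := exists_mem_ASet T φ hx
  refine mem_biUnion ⟨hJ, not_not.mp fun h0 => hxU ?_⟩ hxJ
  exact mem_biUnion ⟨Or.inl ⟨hJ, pos_iff_ne_zero.mpr h0⟩,
    subset_of_mem_ASet_of_mem_Sphi T φ hI hJ hxJ hxI⟩ hxJ

end MaximalFunction

theorem measure_eq_tsum_ASet_general (μ : Measure X)
    (T : DyadicTree μ) (φ : X → ℝ≥0∞) (hgood : TGood T φ)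
    (I : Set X) (hI : I ∈ Sphi T φ) :
    μ (I \ ⋃ J ∈ {J ∈ Sphi T φ | J ⊆ I}, ASet T φ J) = 0 ∧
    μ ((⋃ J ∈ {J ∈ Sphi T φ | J ⊆ I}, ASet T φ J) \ I) = 0 ∧
    μ I = ∑' J : {J ∈ Sphi T φ | J ⊆ I}, μ (ASet T φ J) := by
  have hUI : ⋃ J ∈ {J ∈ Sphi T φ | J ⊆ I}, ASet T φ J ⊆ I :=
    iUnion₂_subset fun J hJ => (ASet_subset T φ J).trans hJ.2
  have hIU : μ (I \ ⋃ J ∈ {J ∈ Sphi T φ | J ⊆ I}, ASet T φ J) = 0 :=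
    measure_mono_null (diff_biUnion_ASet_subset T φ hI)
      (measure_union_null hgood (measure_biUnion_null_ASet T φ))
  have hS : {J ∈ Sphi T φ | J ⊆ I} ⊆ T.mem := (sep_subset _ _).trans (Sphi_subset_mem T φ)
  refine ⟨hIU, by rw [sdiff_eq_empty.mpr hUI, measure_empty], ?_⟩
  rw [← measure_eq_measure_of_null_sdiff hUI hIU]
  refine measure_biUnion (T.mem_countable.mono hS) ?_ fun J hJ => measurableSet_ASet T φ (hS hJ)
  exact fun J hJ K hK hne => disjoint_left.mpr fun x hxJ hxK =>
    hne (eq_of_mem_ASet T φ (hS hJ) (hS hK) hxJ hxK)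

/-- Lemma 3.2 iii): for `φ` `𝒯`-good and `I ∈ S_φ`, `I` coincides up to a `μ`-null set
with `⋃ {A(φ,J) : J ∈ S_φ, J ⊆ I}`; in particular
`μ(I) = Σ_{J ∈ S_φ, J ⊆ I} μ(A(φ,J))`. -/
theorem measure_eq_tsum_ASet (μ : Measure X) [IsProbabilityMeasure μ] [NullSingletonClass μ]
    (T : DyadicTree μ) (φ : X → ℝ≥0∞) (hφ : Measurable φ)
    (hint : ∫⁻ y, φ y ∂μ ≠ ∞) (hgood : TGood T φ)
    (I : Set X) (hI : I ∈ Sphi T φ) :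
    μ (I \ ⋃ J ∈ {J ∈ Sphi T φ | J ⊆ I}, ASet T φ J) = 0 ∧
    μ ((⋃ J ∈ {J ∈ Sphi T φ | J ⊆ I}, ASet T φ J) \ I) = 0 ∧
    μ I = ∑' J : {J ∈ Sphi T φ | J ⊆ I}, μ (ASet T φ J) :=
  measure_eq_tsum_ASet_general μ T φ hgood I hI
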